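/- Assuming countable choice: a function F : ℕ^ℕ → ℕ is realisable by a Brouwer-operation (i.e., there is γ ∈ K such that for every α there is n with γ(ᾱn) = F(α) + 1) if and only if F is formally continuous (induced by a formal topology map from formal Baire space to the formal natural numbers). -/

import Mathlib

/-- Initial segment of `α` of length `n`. -/
def seg (α : ℕ → ℕ) (n : ℕ) : List ℕ := List.ofFn (fun i : Fin n => α i)

/-- `a` followed by the constant zero sequence. -/
def zext (a : List ℕ) : ℕ → ℕ := fun i => a.getD i 0

/-- Upward closure under extension. -/
def extU (U : Set (List ℕ)) : Set (List ℕ) := {a | ∃ b ∈ U, b <+: a}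

/-- The cover of formal Baire space, generated by η, ζ, ϝ. -/
inductive Cover : List ℕ → Set (List ℕ) → Prop
  | eta {a : List ℕ} {U : Set (List ℕ)} : a ∈ U → Cover a U
  | zeta {a : List ℕ} {U : Set (List ℕ)} (k : ℕ) : Cover a U → Cover (a ++ [k]) U
  | digamma {a : List ℕ} {U : Set (List ℕ)} : (∀ n, Cover (a ++ [n]) U) → Cover a U

/-- A spread: a decidable tree where every node has a child. -/
def IsSpread (T : Set (List ℕ)) : Prop :=
  (∀ a, a ∈ T ∨ a ∉ T) ∧ (∀ a b : List ℕ, a <+: b → b ∈ T → a ∈ T) ∧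
  (∀ a ∈ T, ∃ n, a ++ [n] ∈ T)

/-- A fan: a finitely branching spread. -/
def IsFan (T : Set (List ℕ)) : Prop :=
  IsSpread T ∧ ∀ a ∈ T, ∃ N, ∀ n, a ++ [n] ∈ T → n ≤ N

/-- `α` is a path in the tree `T`. -/
def IsPath (T : Set (List ℕ)) (α : ℕ → ℕ) : Prop := ∀ n, seg α n ∈ T

/-- A c-bar: a c-set barring every sequence. -/
def IsCBar (P : Set (List ℕ)) : Prop :=
  (∃ δ : List ℕ → ℕ, ∀ a, a ∈ P ↔ ∀ b, δ a = δ (a ++ b)) ∧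
  (∀ α : ℕ → ℕ, ∃ n, seg α n ∈ P)

/-- Pointwise continuity for `F : ℕ^ℕ → ℕ`. -/
def PtwiseCts (F : (ℕ → ℕ) → ℕ) : Prop :=
  ∀ α : ℕ → ℕ, ∃ n, ∀ β : ℕ → ℕ, seg β n = seg α n → F β = F α

/-- An inductive subset of ℕ*. -/
def Inductive (Q : Set (List ℕ)) : Prop := ∀ a, (∀ n, a ++ [n] ∈ Q) → a ∈ Q

/-- Preimage of a subset of ℕ under a relation r ⊆ ℕ* × ℕ. -/
def rInv (r : List ℕ → ℕ → Prop) (D : Set ℕ) : Set (List ℕ) := {a | ∃ n ∈ D, r a n}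

/-- Formal topology map from formal Baire space to formal natural numbers. -/
def IsFTopMap (r : List ℕ → ℕ → Prop) : Prop :=
  Cover [] (rInv r Set.univ) ∧
  ∀ n m : ℕ, ∀ a ∈ extU (rInv r {n}) ∩ extU (rInv r {m}),
    Cover a (rInv r {l | l = n ∧ n = m})

/-- `F` is formally continuous: induced by a formal topology map on points. -/
def FormallyCts (F : (ℕ → ℕ) → ℕ) : Prop :=
  ∃ r : List ℕ → ℕ → Prop, IsFTopMap r ∧
    ∀ α : ℕ → ℕ, {n | ∃ k, r (seg α k) n} = {F α}

/-- The class of Brouwer-operations. -/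
inductive IsBrouwerOp : (List ℕ → ℕ) → Prop
  | const (n : ℕ) : IsBrouwerOp (fun _ => n + 1)
  | sup {γ : List ℕ → ℕ} : γ [] = 0 →
      (∀ n, IsBrouwerOp (fun a => γ (n :: a))) → IsBrouwerOp γ

/-- `bar γ`: minimal sequences on which `γ` is positive. -/
def barOf (γ : List ℕ → ℕ) : Set (List ℕ) :=
  {a | 0 < γ a ∧ ∀ b : List ℕ, b <+: a → b ≠ a → γ b = 0}

/-- The set presentation `Cov` of formal Baire space. -/
inductive Cov : List ℕ → Set (List ℕ) → Prop
  | single (a : List ℕ) : Cov a {a}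
  | union {a : List ℕ} {U : ℕ → Set (List ℕ)} :
      (∀ n, Cov (a ++ [n]) (U n)) → Cov a (⋃ n, U n)

/-! A Brouwer-operation `γ` realising `F` gives the formal topology map `a r n :↔ γ a = n + 1`:
`γ` is positive on a cover of `⟨⟩`, and once positive it is constant along extensions.
Conversely, a formal topology map `r` yields a cover `⟨⟩ ◁ r⁻ℕ`, and a cover is turned into a
Brouwer-operation by induction on its derivation (choosing, at each `ϝ`-step, one operation for every
child: this is where countable choice enters). Along each branch it becomes positive only once the
branch has passed a node `u` with `u r m`, and then `F` is the constant `m` on all sequences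
through `u`, so relabelling its positive values by `F` gives a Brouwer-operation realising `F`. -/

lemma seg_length (α : ℕ → ℕ) (n : ℕ) : (seg α n).length = n := by
  simp [seg]

lemma take_seg {α : ℕ → ℕ} {m n : ℕ} (h : m ≤ n) : (seg α n).take m = seg α m :=
  (Fin.ofFn_take_eq_take_ofFn h _).symm

lemma seg_prefix_seg (α : ℕ → ℕ) {m n : ℕ} (h : m ≤ n) : seg α m <+: seg α n :=
  take_seg h ▸ List.take_prefix m _

lemma seg_prefix_or_prefix (α : ℕ → ℕ) (m n : ℕ) :
    seg α m <+: seg α n ∨ seg α n <+: seg α m :=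
  (le_total m n).imp (seg_prefix_seg α) (seg_prefix_seg α)

lemma seg_length_eq_of_prefix {α : ℕ → ℕ} {u a : List ℕ} (hua : u <+: a)
    (ha : seg α a.length = a) : seg α u.length = u := by
  rw [← take_seg hua.length_le, ha, ← List.prefix_iff_eq_take.1 hua]

lemma seg_zext (a : List ℕ) : seg (zext a) a.length = a := by
  apply List.ext_getElem (seg_length _ _)
  intro i _ hi
  simp [seg, zext]

namespace Cover

lemma mono {a : List ℕ} {U V : Set (List ℕ)} (h : Cover a U) (hUV : U ⊆ V) : Cover a V := by
  induction h with
  | eta ha => exact eta (hUV ha)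
  | zeta k _ ih => exact zeta k (ih hUV)
  | digamma _ ih => exact digamma fun n => ih n hUV

lemma append_left {a : List ℕ} {U : Set (List ℕ)} (h : Cover a U) (c : List ℕ) :
    Cover (c ++ a) ((c ++ ·) '' U) := by
  induction h with
  | eta ha => exact eta ⟨_, ha, rfl⟩
  | zeta k _ ih => rw [← List.append_assoc]; exact zeta k ih
  | digamma _ ih => exact digamma fun n => by rw [List.append_assoc]; exact ih n

lemma exists_isBrouwerOp {a : List ℕ} {U : Set (List ℕ)} (h : Cover a U) :
    ∃ γ : List ℕ → ℕ, IsBrouwerOp γ ∧ ∀ b, 0 < γ b → ∃ u ∈ U, u <+: a ++ b := by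
  induction h with
  | eta ha => exact ⟨fun _ => 1, .const 0, fun b _ => ⟨_, ha, List.prefix_append _ b⟩⟩
  | zeta k _ ih =>
    obtain ⟨γ, hγ, hbar⟩ := ih
    refine ⟨fun b => γ (k :: b), ?_, fun b hb => ?_⟩
    · cases hγ with
      | const n => exact .const n
      | sup _ hchild => exact hchild k
    · simpa using hbar (k :: b) hb
  | digamma _ ih =>
    choose γ hγ hbar using ih
    refine ⟨fun | [] => 0 | n :: b => γ n b, .sup rfl hγ, ?_⟩
    rintro (_ | ⟨n, b⟩) hb
    · exact absurd hb (lt_irrefl 0)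
    · simpa using hbar n b hb

end Cover

namespace IsBrouwerOp

variable {γ : List ℕ → ℕ}

lemma eq_of_prefix (hγ : IsBrouwerOp γ) {b c : List ℕ} (hbc : b <+: c) (hb : 0 < γ b) :
    γ c = γ b := by
  induction hγ generalizing b c with
  | const n => rfl
  | sup h0 _ ih =>
    obtain _ | ⟨x, b⟩ := b
    · exact absurd hb (by simp [h0])
    · obtain ⟨t, rfl⟩ := hbc
      exact ih x (List.prefix_append b t) hb

lemma eq_of_prefix_or_prefix (hγ : IsBrouwerOp γ) {b c : List ℕ} (hbc : b <+: c ∨ c <+: b)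
    (hb : 0 < γ b) (hc : 0 < γ c) : γ b = γ c := by
  rcases hbc with hbc | hcb
  · exact (hγ.eq_of_prefix hbc hb).symm
  · exact hγ.eq_of_prefix hcb hc

lemma exists_pos_seg (hγ : IsBrouwerOp γ) (α : ℕ → ℕ) : ∃ n, 0 < γ (seg α n) := by
  induction hγ generalizing α with
  | const n => exact ⟨0, Nat.succ_pos n⟩
  | sup _ _ ih =>
    obtain ⟨m, hm⟩ := ih (α 0) (fun i => α (i + 1))
    exact ⟨m + 1, by simpa [seg, List.ofFn_succ] using hm⟩

lemma cover_pos (hγ : IsBrouwerOp γ) : Cover [] {a | 0 < γ a} := by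
  induction hγ with
  | const n => exact .eta (Nat.succ_pos n)
  | sup _ _ ih =>
    refine .digamma fun n => ((ih n).append_left [n]).mono ?_
    rintro _ ⟨u, hu, rfl⟩
    simpa using hu

lemma ite_pos_add_one (hγ : IsBrouwerOp γ) {g : List ℕ → ℕ}
    (hg : ∀ a b, 0 < γ a → g (a ++ b) = g a) :
    IsBrouwerOp (fun a => if 0 < γ a then g a + 1 else 0) := by
  induction hγ generalizing g with
  | const n =>
    have hconst : ∀ a, g a = g [] := fun a => hg [] a (Nat.succ_pos n)
    simpa [hconst] using IsBrouwerOp.const (g [])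
  | sup h0 _ ih =>
    exact .sup (by simp [h0]) fun n => ih n fun a b ha => hg (n :: a) b ha

end IsBrouwerOp

theorem formallyCts_of_isBrouwerOp {F : (ℕ → ℕ) → ℕ} {γ : List ℕ → ℕ} (hγ : IsBrouwerOp γ)
    (hF : ∀ α : ℕ → ℕ, ∃ n, γ (seg α n) = F α + 1) : FormallyCts F := by
  refine ⟨fun a n => γ a = n + 1, ⟨?_, ?_⟩, fun α => ?_⟩
  · exact hγ.cover_pos.mono fun a (ha : 0 < γ a) => ⟨γ a - 1, trivial, by omega⟩
  · rintro n m a ⟨⟨b, ⟨n', hn', hb⟩, hba⟩, ⟨c, ⟨m', hm', hc⟩, hca⟩⟩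
    rw [Set.mem_singleton_iff] at hn' hm'
    subst n' m'
    have hnm : n = m := by
      have := hγ.eq_of_prefix_or_prefix (List.prefix_or_prefix_of_prefix hba hca)
        (by omega) (by omega)
      omega
    exact .eta ⟨n, ⟨rfl, hnm⟩, (hγ.eq_of_prefix hba (by omega)).trans hb⟩
  · obtain ⟨k', hk'⟩ := hF α
    ext n
    refine ⟨fun ⟨k, hk⟩ => ?_, fun hn => ⟨k', (Set.mem_singleton_iff.1 hn).symm ▸ hk'⟩⟩
    have := hγ.eq_of_prefix_or_prefix (seg_prefix_or_prefix α k k') (by omega) (by omega)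
    exact Set.mem_singleton_iff.2 (by omega)

lemma eq_of_rel_of_seg_eq {F : (ℕ → ℕ) → ℕ} {r : List ℕ → ℕ → Prop}
    (hpts : ∀ α : ℕ → ℕ, {n | ∃ k, r (seg α k) n} = {F α}) {u : List ℕ} {m : ℕ} (hu : r u m)
    {β : ℕ → ℕ} (hβ : seg β u.length = u) : F β = m :=
  ((Set.ext_iff.1 (hpts β) m).1 ⟨u.length, by rwa [hβ]⟩).symm

theorem exists_isBrouwerOp_of_formallyCts {F : (ℕ → ℕ) → ℕ} (hF : FormallyCts F) :
    ∃ γ : List ℕ → ℕ, IsBrouwerOp γ ∧ ∀ α : ℕ → ℕ, ∃ n, γ (seg α n) = F α + 1 := by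
  obtain ⟨r, ⟨hcover, -⟩, hpts⟩ := hF
  obtain ⟨γ₀, hγ₀, hbar⟩ := hcover.exists_isBrouwerOp
  have hF_const : ∀ a, 0 < γ₀ a → ∀ β, seg β a.length = a → F β = F (zext a) := by
    intro a ha β hβ
    obtain ⟨u, ⟨m, -, hum⟩, hua⟩ := hbar a ha
    rw [List.nil_append] at hua
    rw [eq_of_rel_of_seg_eq hpts hum (seg_length_eq_of_prefix hua hβ),
      eq_of_rel_of_seg_eq hpts hum (seg_length_eq_of_prefix hua (seg_zext a))]
  refine ⟨fun a => if 0 < γ₀ a then F (zext a) + 1 else 0, hγ₀.ite_pos_add_one ?_, fun α => ?_⟩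
  · exact fun a b ha =>
      hF_const a ha _ (seg_length_eq_of_prefix (List.prefix_append a b) (seg_zext _))
  · obtain ⟨n, hn⟩ := hγ₀.exists_pos_seg α
    exact ⟨n, by simp only [hn, if_true, hF_const _ hn α (by rw [seg_length])]⟩

theorem realisable_iff_formallyCts (F : (ℕ → ℕ) → ℕ) :
    (∃ γ : List ℕ → ℕ, IsBrouwerOp γ ∧ ∀ α : ℕ → ℕ, ∃ n, γ (seg α n) = F α + 1)
      ↔ FormallyCts F :=
  ⟨fun ⟨_, hγ, hF⟩ => formallyCts_of_isBrouwerOp hγ hF, exists_isBrouwerOp_of_formallyCts⟩
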